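/- Let A be an associative ℂ-algebra containing elements E_0, E_1, …, E_{n-1} satisfying the type D Temperley–Lieb relations. Then for all integers i, j with i > j+1 > 1 (so j ≥ 1 and 3 ≤ i ≤ n-1), one has E_{i,0}E^{1,j}E_i = E_{i-2,0}E^{1,j}E_i. -/

import Mathlib

/-!
Write `E_{i,0} = E_i E_{i-1} E_{i-2,0}` and `X = E_{i-2,0} E^{1,j}`. Every generator occurring in `X`
has index `0` or at most `i - 2`, so `E_i` commutes with `X`, and then
`E_i E_{i-1} X E_i = E_i E_{i-1} E_i X = E_i X = X E_i`.
-/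

/-- `descProd E i j = E i * E (i-1) * ⋯ * E j` (empty product `1` when `j = i + 1`). -/
def descProd {A : Type*} [Monoid A] (E : ℕ → A) (i j : ℕ) : A :=
  ((List.range (i + 1 - j)).map (fun k => E (i - k))).prod

/-- `ascProd E i j = E i * E (i+1) * ⋯ * E j` (empty product `1` when `j = i - 1`). -/
def ascProd {A : Type*} [Monoid A] (E : ℕ → A) (i j : ℕ) : A :=
  ((List.range (j + 1 - i)).map (fun k => E (i + k))).prod

/-- Type D convention: `E_{i,0} = E i * E (i-1) * ⋯ * E 3 * E 2 * E 0` for `i ≥ 2`,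
and `E_{1,0} = E 0`. -/
def descProdD {A : Type*} [Monoid A] (E : ℕ → A) (i : ℕ) : A :=
  descProd E i 2 * E 0

section Monoid

variable {M : Type*} [Monoid M]

theorem mul_mul_mul_eq_of_commute {e f x : M} (hefe : e * f * e = e) (hx : Commute e x) :
    e * f * x * e = x * e := by
  rw [mul_assoc _ x, ← hx.eq, ← mul_assoc, hefe, hx.eq]

variable (E : ℕ → M)

theorem descProd_succ {i j : ℕ} (h : j ≤ i + 1) :
    descProd E (i + 1) j = E (i + 1) * descProd E i j := by
  unfold descProd
  rw [show i + 1 + 1 - j = (i + 1 - j) + 1 by omega, List.range_succ_eq_map, List.map_cons,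
    List.prod_cons, List.map_map]
  congr 3
  funext k
  simp only [Function.comp_apply]
  congr 1
  omega

theorem descProdD_add_two {i : ℕ} (hi : 1 ≤ i) :
    descProdD E (i + 2) = E (i + 2) * E (i + 1) * descProdD E i := by
  rw [descProdD, descProdD, descProd_succ E (by omega), descProd_succ E (by omega)]
  simp only [mul_assoc]

variable {E}

theorem Commute.descProd_right {x : M} {i j : ℕ} (h : ∀ m, j ≤ m → m ≤ i → Commute x (E m)) :
    Commute x (descProd E i j) := by
  refine Commute.list_prod_right _ _ fun y hy => ?_
  obtain ⟨k, hk, rfl⟩ := List.mem_map.mp hy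
  exact h _ (by rw [List.mem_range] at hk; omega) (Nat.sub_le i k)

theorem Commute.ascProd_right {x : M} {i j : ℕ} (h : ∀ m, i ≤ m → m ≤ j → Commute x (E m)) :
    Commute x (ascProd E i j) := by
  refine Commute.list_prod_right _ _ fun y hy => ?_
  obtain ⟨k, hk, rfl⟩ := List.mem_map.mp hy
  exact h _ (Nat.le_add_right i k) (by rw [List.mem_range] at hk; omega)

end Monoid

theorem typeD_lemma_d_general (n : ℕ) (A : Type*) [Ring A]
    (E : ℕ → A)
    (hcomm : ∀ i j, 1 ≤ j → j + 1 < i → i ≤ n - 1 → E i * E j = E j * E i)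
    (hcomm0 : ∀ i, i ≤ n - 1 → i ≠ 2 → E i * E 0 = E 0 * E i)
    (hdown : ∀ i, 2 ≤ i → i ≤ n - 1 → E i * E (i - 1) * E i = E i) :
    ∀ i j, 1 ≤ j → j + 1 < i → i ≤ n - 1 →
      descProdD E i * ascProd E 1 j * E i = descProdD E (i - 2) * ascProd E 1 j * E i := by
  intro i j hj hji hin
  obtain ⟨k, rfl⟩ : ∃ k, i = k + 2 := ⟨i - 2, by omega⟩
  have hcomm_low : ∀ m, 1 ≤ m → m ≤ k → Commute (E (k + 2)) (E m) := fun m hm hmk =>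
    hcomm _ m hm (by omega) hin
  have hX : Commute (E (k + 2)) (descProdD E k * ascProd E 1 j) :=
    ((Commute.descProd_right fun m hm hmk => hcomm_low m (by omega) hmk).mul_right
      (hcomm0 _ hin (by omega))).mul_right
      (Commute.ascProd_right fun m hm hmj => hcomm_low m hm (by omega))
  rw [Nat.add_sub_cancel, descProdD_add_two E (by omega), mul_assoc _ (descProdD E k)]
  exact mul_mul_mul_eq_of_commute (hdown _ (by omega) hin) hX

/-- Type D Temperley–Lieb relation: `E_{i,0} E^{1,j} E_i = E_{i-2,0} E^{1,j} E_i`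
for `i > j + 1 > 1` (with `i ≤ n - 1`). -/
theorem typeD_lemma_d (n : ℕ) (hn : 4 ≤ n) (δ : ℂ) (A : Type*) [Ring A] [Algebra ℂ A]
    (E : ℕ → A)
    (hsq : ∀ i, i ≤ n - 1 → E i * E i = δ • E i)
    (hcomm : ∀ i j, 1 ≤ j → j + 1 < i → i ≤ n - 1 → E i * E j = E j * E i)
    (hcomm0 : ∀ i, i ≤ n - 1 → i ≠ 2 → E i * E 0 = E 0 * E i)
    (hup : ∀ i, 1 ≤ i → i + 1 ≤ n - 1 → E i * E (i + 1) * E i = E i)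
    (hdown : ∀ i, 2 ≤ i → i ≤ n - 1 → E i * E (i - 1) * E i = E i)
    (h020 : E 0 * E 2 * E 0 = E 0)
    (h202 : E 2 * E 0 * E 2 = E 2) :
    ∀ i j, 1 ≤ j → j + 1 < i → i ≤ n - 1 →
      descProdD E i * ascProd E 1 j * E i = descProdD E (i - 2) * ascProd E 1 j * E i :=
  typeD_lemma_d_general n A E hcomm hcomm0 hdown
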